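/- Let φ < 0 and 0 < L < M be real numbers. Then the function z ↦ (M − z)⁺ / z^φ on [L, ∞) attains its maximum exactly at the point z₂* = max(φM/(φ − 1), L); that is, z₂* is the unique maximizer of (M − z)⁺ z^{−φ} over [L, ∞). -/

import Mathlib

/-!
For `z < M` the objective equals `g z = (M - z) * z ^ (-φ)`, whose derivative
`z ^ (-φ - 1) * (φ - 1) * (z - φ M / (φ - 1))` changes sign from `+` to `-` at the interior
critical point `φ M / (φ - 1) ∈ (0, M)`. Hence `g` has a unique maximiser on `[L, ∞)` at
`max (φ M / (φ - 1)) L`, where it is positive, while the objective vanishes for `z ≥ M`.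
-/

open Real Set

section SubMulRpowNeg

variable {φ M : ℝ}

theorem hasDerivAt_sub_mul_rpow_neg (hφ : φ ≠ 1) {z : ℝ} (hz : 0 < z) :
    HasDerivAt (fun z : ℝ => (M - z) * z ^ (-φ))
      (z ^ (-φ - 1) * ((φ - 1) * (z - φ * M / (φ - 1)))) z := by
  have hderiv : HasDerivAt (fun z : ℝ => (M - z) * z ^ (-φ)) _ z :=
    ((hasDerivAt_id z).const_sub M).mul (hasDerivAt_rpow_const (p := -φ) (Or.inl hz.ne'))
  convert hderiv using 1
  have hpow : z ^ (-φ) = z ^ (-φ - 1) * z := by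
    rw [← rpow_add_one hz.ne', sub_add_cancel]
  rw [hpow, mul_sub, mul_div_cancel₀ _ (sub_ne_zero.mpr hφ)]
  simp only [id]
  ring

theorem strictMonoOn_sub_mul_rpow_neg (hφ : φ < 1) :
    StrictMonoOn (fun z : ℝ => (M - z) * z ^ (-φ)) (Ioc 0 (φ * M / (φ - 1))) := by
  refine strictMonoOn_of_hasDerivWithinAt_pos (convex_Ioc _ _)
    (fun x hx => (hasDerivAt_sub_mul_rpow_neg hφ.ne hx.1).continuousAt.continuousWithinAt)
    (fun x hx => (hasDerivAt_sub_mul_rpow_neg hφ.ne (interior_subset hx).1).hasDerivWithinAt)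
    fun x hx => ?_
  rw [interior_Ioc] at hx
  exact mul_pos (rpow_pos_of_pos hx.1 _) (mul_pos_of_neg_of_neg (by linarith) (by linarith [hx.2]))

theorem strictAntiOn_sub_mul_rpow_neg (hφ : φ < 1) {c : ℝ} (hc : 0 < c)
    (hcrit : φ * M / (φ - 1) ≤ c) :
    StrictAntiOn (fun z : ℝ => (M - z) * z ^ (-φ)) (Ici c) := by
  refine strictAntiOn_of_hasDerivWithinAt_neg (convex_Ici _)
    (fun x hx =>
      (hasDerivAt_sub_mul_rpow_neg hφ.ne (hc.trans_le hx)).continuousAt.continuousWithinAt)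
    (fun x hx => (hasDerivAt_sub_mul_rpow_neg hφ.ne
      (hc.trans_le (interior_subset hx))).hasDerivWithinAt)
    fun x hx => ?_
  rw [interior_Ici] at hx
  exact mul_neg_of_pos_of_neg (rpow_pos_of_pos (hc.trans hx) _)
    (mul_neg_of_neg_of_pos (by linarith) (by linarith [mem_Ioi.mp hx]))

theorem sub_mul_rpow_neg_lt_of_ne_max (hφ : φ < 1) {L z : ℝ} (hL : 0 < L) (hz : L ≤ z)
    (hne : z ≠ max (φ * M / (φ - 1)) L) :
    (M - z) * z ^ (-φ) < (M - max (φ * M / (φ - 1)) L) * max (φ * M / (φ - 1)) L ^ (-φ) := by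
  set z₂ := max (φ * M / (φ - 1)) L
  have hz₂ : 0 < z₂ := hL.trans_le (le_max_right _ _)
  rcases hne.lt_or_gt with hlt | hgt
  · have hcrit : z₂ = φ * M / (φ - 1) :=
      max_eq_left (not_lt.mp fun h => hlt.not_ge ((max_eq_right h.le).trans_le hz))
    exact strictMonoOn_sub_mul_rpow_neg hφ ⟨hL.trans_le hz, hlt.le.trans_eq hcrit⟩
      ⟨hz₂, hcrit.le⟩ hlt
  · exact strictAntiOn_sub_mul_rpow_neg hφ hz₂ (le_max_left _ _) (mem_Ici.mpr le_rfl)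
      (mem_Ici.mpr hgt.le) hgt

theorem posPart_sub_div_rpow_eq (M : ℝ) {z : ℝ} (hz : 0 < z) :
    max (M - z) 0 / z ^ φ = max ((M - z) * z ^ (-φ)) 0 := by
  rw [div_eq_mul_inv, ← rpow_neg hz.le, max_mul_of_nonneg _ _ (rpow_pos_of_pos hz _).le, zero_mul]

end SubMulRpowNeg

/-- For `φ < 0` and `0 < L < M`, the function
`z ↦ (M − z)⁺ / z^φ` on `[L, ∞)` attains its maximum exactly at
`z₂* = max(φM/(φ − 1), L)`, which is the unique maximizer. -/
theorem compound_upper_boundary (φ L M : ℝ) (hφ : φ < 0) (hL : 0 < L) (hLM : L < M)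
    (z₂ : ℝ) (hz₂ : z₂ = max (φ * M / (φ - 1)) L) :
    z₂ ∈ Set.Ici L ∧
    ∀ z ∈ Set.Ici L, z ≠ z₂ →
      max (M - z) 0 / z ^ φ < max (M - z₂) 0 / z₂ ^ φ := by
  have hφ1 : φ - 1 < 0 := by linarith
  have hcrit : φ * M / (φ - 1) < M := by
    rw [div_lt_iff_of_neg hφ1]
    nlinarith
  have hLz₂ : L ≤ z₂ := hz₂ ▸ le_max_right _ _
  have hz₂M : z₂ < M := hz₂ ▸ max_lt hcrit hLM
  refine ⟨hLz₂, fun z hz hne => ?_⟩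
  have hz₂0 : 0 < z₂ := hL.trans_le hLz₂
  have hpeak : 0 < (M - z₂) * z₂ ^ (-φ) := mul_pos (sub_pos.mpr hz₂M) (rpow_pos_of_pos hz₂0 _)
  rw [posPart_sub_div_rpow_eq M (hL.trans_le hz), posPart_sub_div_rpow_eq M hz₂0,
    max_eq_left hpeak.le]
  subst hz₂
  exact max_lt (sub_mul_rpow_neg_lt_of_ne_max (by linarith) hL hz hne) hpeak
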